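/- Suppose v_1, ..., v_{d²} ∈ ℂ^d are vectors such that for every X ∈ M_d(ℂ), (1/(d+1))·(X + tr(X)·I_d) = Σ_{i=1}^{d²} (v_i v_i*) X (v_i v_i*), and suppose the matrices {v_i v_i*}_{i=1}^{d²} are linearly independent in M_d(ℂ). Then ‖v_i‖⁴ = 1/d for all 1 ≤ i ≤ d², and |⟨v_i, v_j⟩|² = 1/(d(d+1)) for all i ≠ j; consequently, the normalized vectors w_i = v_i/‖v_i‖ satisfy |⟨w_i, w_j⟩|² = 1/(d+1) for all i ≠ j. -/

import Mathlib

open Matrix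

/-! Write `P i = v i (v i)*`. Evaluating the identity at `X = 1` gives `1 = ∑ i, ‖v i‖² P i`,
and at `X = P j` it gives `∑ i, |⟨v i, v j⟩|² P i = (d+1)⁻¹ (P j + ‖v j‖² ∑ i, ‖v i‖² P i)`.
Comparing coefficients of the independent `P i` yields
`|⟨v i, v j⟩|² = (d+1)⁻¹ (‖v i‖² ‖v j‖² + δ i j)`: on the diagonal `d ‖v i‖⁴ = 1`, so all norms
agree, and off the diagonal `|⟨v i, v j⟩|² = 1/(d(d+1))`. -/

/-- The rank-one matrix `x y*` with entries `(x y*)_{k,l} = x_k * conj (y_l)`. -/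
noncomputable def outer {d : ℕ} (x y : Fin d → ℂ) : Matrix (Fin d) (Fin d) ℂ :=
  fun k l => x k * (starRingEnd ℂ) (y l)

lemma outer_mul_outer {d : ℕ} (x y z w : EuclideanSpace ℂ (Fin d)) :
    outer x y * outer z w = (inner ℂ y z : ℂ) • outer x w := by
  ext k l
  simp only [Matrix.mul_apply, outer, Matrix.smul_apply, smul_eq_mul, PiLp.inner_apply,
    RCLike.inner_apply, Finset.sum_mul]
  exact Finset.sum_congr rfl fun m _ => by ring

lemma trace_outer {d : ℕ} (x y : EuclideanSpace ℂ (Fin d)) :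
    (outer x y).trace = (inner ℂ y x : ℂ) := by
  simp only [Matrix.trace, Matrix.diag, outer, PiLp.inner_apply, RCLike.inner_apply]

lemma outer_self_mul_outer_self_mul_outer_self {d : ℕ} (x y : EuclideanSpace ℂ (Fin d)) :
    outer x x * outer y y * outer x x = ((‖(inner ℂ x y : ℂ)‖ ^ 2 : ℝ) : ℂ) • outer x x := by
  rw [outer_mul_outer, Matrix.smul_mul, outer_mul_outer, smul_smul, ← inner_conj_symm y x,
    Complex.mul_conj', Complex.ofReal_pow]

lemma norm_inner_inv_norm_smul_sq {𝕜 E : Type*} [RCLike 𝕜] [NormedAddCommGroup E]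
    [InnerProductSpace 𝕜 E] (x y : E) :
    ‖(inner 𝕜 ((‖x‖⁻¹ : 𝕜) • x) ((‖y‖⁻¹ : 𝕜) • y) : 𝕜)‖ ^ 2 =
      ‖(inner 𝕜 x y : 𝕜)‖ ^ 2 / (‖x‖ ^ 2 * ‖y‖ ^ 2) := by
  simp only [inner_smul_left, inner_smul_right, norm_mul, RCLike.norm_conj, norm_inv,
    RCLike.norm_ofReal, abs_norm]
  ring

section KrausRepresentation

variable {d : ℕ} {ι : Type*} [Fintype ι] {v : ι → EuclideanSpace ℂ (Fin d)}

def IsKrausFamily (v : ι → EuclideanSpace ℂ (Fin d)) : Prop :=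
  ∀ X : Matrix (Fin d) (Fin d) ℂ,
    ((d : ℂ) + 1)⁻¹ • (X + X.trace • (1 : Matrix (Fin d) (Fin d) ℂ)) =
      ∑ i, outer (v i) (v i) * X * outer (v i) (v i)

lemma one_eq_sum_norm_sq_smul_outer (hrep : IsKrausFamily v) :
    (1 : Matrix (Fin d) (Fin d) ℂ) = ∑ i, ((‖v i‖ ^ 2 : ℝ) : ℂ) • outer (v i) (v i) := by
  have hd : ((d : ℂ) + 1) ≠ 0 := by exact_mod_cast Nat.succ_ne_zero d
  have h := hrep 1
  rw [Matrix.trace_one, Fintype.card_fin,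
    show (1 : Matrix (Fin d) (Fin d) ℂ) + (d : ℂ) • 1 = ((d : ℂ) + 1) • 1 by module, smul_smul,
    inv_mul_cancel₀ hd, one_smul] at h
  rw [h]
  refine Finset.sum_congr rfl fun i _ => ?_
  rw [Matrix.mul_one, outer_mul_outer, inner_self_eq_norm_sq_to_K, Complex.ofReal_pow]
  rfl

lemma norm_inner_sq_eq [DecidableEq ι] (hrep : IsKrausFamily v)
    (hli : LinearIndependent ℂ fun i => outer (v i) (v i)) (i j : ι) :
    ‖(inner ℂ (v i) (v j) : ℂ)‖ ^ 2 =
      ((d : ℝ) + 1)⁻¹ * (‖v i‖ ^ 2 * ‖v j‖ ^ 2 + if i = j then 1 else 0) := by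
  have hsandwich : ∑ k, outer (v k) (v k) * outer (v j) (v j) * outer (v k) (v k) =
      ∑ k, ((‖(inner ℂ (v k) (v j) : ℂ)‖ ^ 2 : ℝ) : ℂ) • outer (v k) (v k) :=
    Finset.sum_congr rfl fun k _ => outer_self_mul_outer_self_mul_outer_self _ _
  have hZ : ((d : ℂ) + 1)⁻¹ • (outer (v j) (v j) + (outer (v j) (v j)).trace • 1) =
      ∑ k, ((((d : ℝ) + 1)⁻¹ * (‖v k‖ ^ 2 * ‖v j‖ ^ 2 + if k = j then 1 else 0) : ℝ) : ℂ) •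
        outer (v k) (v k) := by
    rw [trace_outer, inner_self_eq_norm_sq_to_K, one_eq_sum_norm_sq_smul_outer hrep]
    push_cast [RCLike.ofReal_eq_complex_ofReal, apply_ite Complex.ofReal]
    simp only [Finset.smul_sum, smul_smul, smul_add, mul_add, add_smul, Finset.sum_add_distrib,
      mul_ite, mul_one, mul_zero, ite_smul, zero_smul, Finset.sum_ite_eq', Finset.mem_univ,
      if_true]
    rw [add_comm]
    congr 1
    exact Finset.sum_congr rfl fun k _ => by congr 1; ring
  exact_mod_cast hli.eq_coords_of_eq (hsandwich.symm.trans ((hrep _).symm.trans hZ)) i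

lemma natCast_mul_norm_pow_four_eq_one (hrep : IsKrausFamily v)
    (hli : LinearIndependent ℂ fun i => outer (v i) (v i)) (i : ι) :
    (d : ℝ) * ‖v i‖ ^ 4 = 1 := by
  classical
  have h := norm_inner_sq_eq hrep hli i i
  rw [if_pos rfl, inner_self_eq_norm_sq_to_K, norm_pow, RCLike.norm_ofReal, abs_norm] at h
  field_simp at h
  linear_combination h

lemma norm_pow_four_eq (hrep : IsKrausFamily v)
    (hli : LinearIndependent ℂ fun i => outer (v i) (v i)) (i : ι) :
    ‖v i‖ ^ 4 = 1 / d :=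
  eq_one_div_of_mul_eq_one_right (natCast_mul_norm_pow_four_eq_one hrep hli i)

lemma norm_sq_mul_norm_sq_eq (hrep : IsKrausFamily v)
    (hli : LinearIndependent ℂ fun i => outer (v i) (v i)) (i j : ι) :
    ‖v i‖ ^ 2 * ‖v j‖ ^ 2 = 1 / d := by
  have h4 := norm_pow_four_eq hrep hli
  have hij : ‖v i‖ ^ 2 = ‖v j‖ ^ 2 := by
    refine (sq_eq_sq₀ (by positivity) (by positivity)).1 ?_
    simpa only [← pow_mul] using (h4 i).trans (h4 j).symm
  rw [← hij, ← pow_add]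
  exact h4 i

lemma norm_inner_sq_of_ne (hrep : IsKrausFamily v)
    (hli : LinearIndependent ℂ fun i => outer (v i) (v i)) {i j : ι} (hij : i ≠ j) :
    ‖(inner ℂ (v i) (v j) : ℂ)‖ ^ 2 = 1 / (d * (d + 1)) := by
  classical
  rw [norm_inner_sq_eq hrep hli, if_neg hij, add_zero, norm_sq_mul_norm_sq_eq hrep hli]
  field_simp

end KrausRepresentation

theorem rank_one_positive_kraus_gives_sic {d : ℕ}
    (v : Fin (d ^ 2) → EuclideanSpace ℂ (Fin d))
    (hrep : ∀ X : Matrix (Fin d) (Fin d) ℂ,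
      ((d : ℂ) + 1)⁻¹ • (X + X.trace • (1 : Matrix (Fin d) (Fin d) ℂ)) =
        ∑ i, outer (v i) (v i) * X * outer (v i) (v i))
    (hli : LinearIndependent ℂ fun i => outer (v i) (v i)) :
    (∀ i, ‖v i‖ ^ 4 = 1 / d) ∧
    (∀ i j, i ≠ j → ‖(inner ℂ (v i) (v j) : ℂ)‖ ^ 2 = 1 / (d * (d + 1))) ∧
    (∀ i j, i ≠ j →
      ‖(inner ℂ ((‖v i‖⁻¹ : ℂ) • v i) ((‖v j‖⁻¹ : ℂ) • v j) : ℂ)‖ ^ 2 = 1 / (d + 1)) := by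
  refine ⟨norm_pow_four_eq hrep hli, fun i j => norm_inner_sq_of_ne hrep hli,
    fun i j hij => ?_⟩
  have hd : (d : ℝ) ≠ 0 := left_ne_zero_of_mul_eq_one (natCast_mul_norm_pow_four_eq_one hrep hli i)
  refine (norm_inner_inv_norm_smul_sq (𝕜 := ℂ) (v i) (v j)).trans ?_
  rw [norm_inner_sq_of_ne hrep hli hij, norm_sq_mul_norm_sq_eq hrep hli]
  field_simp
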